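/- Let T be a finite tree with leaf set X, all other vertices of degree 3, and let Y ⊆ X with |Y| ≥ 3, Y = {y₁,…,y_m}. Suppose the medians med_T({y₁,y₂,y_j}) for 3 ≤ j ≤ m are pairwise distinct vertices. Then every vertex of T that is a median of some 3-element subset of Y equals med_T({y₁,y₂,y}) for some y ∈ Y − {y₁,y₂}; i.e., med_T(Y) = {med_T({y₁,y₂,y_j}) : 3 ≤ j ≤ m}. -/

import Mathlib

/-!
Project each `x ∈ Y` onto the geodesic from `a` to `b`: its projection `π x` is the median of
`a, b, x`, with `π a = a` and `π b = b`. When `π u ≠ π v`, the geodesic from `u` to `v` runs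
through `π u` and then `π v`. Hence, for three vertices with distinct projections, the middle
projection lies on all three geodesics between them and, medians in a tree being unique, is
their median. The projections of points of `Y` are distinct (`g` is injective, and the leaves
`a`, `b` lie strictly between no two vertices), and a leaf is never the median of three leaves,
so the middle point is not `a` or `b`.
-/

/-- `m` is the median of the finite vertex set `S` in the graph `T`. -/
def isMedianOf {V : Type*} (T : SimpleGraph V) (S : Finset V) (m : V) : Prop :=
  ∀ x ∈ S, ∀ y ∈ S, x ≠ y → T.dist x m + T.dist m y = T.dist x y

namespace SimpleGraph

variable {V : Type*} {T : SimpleGraph V} {u v w x y z a b c m m' p q r : V}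

theorem IsTree.length_eq_dist (hT : T.IsTree) (p : T.Walk u v) (hp : p.IsPath) :
    p.length = T.dist u v := by
  obtain ⟨q, hq, hlen⟩ := hT.connected.exists_path_of_dist u v
  obtain ⟨_, _, huniq⟩ := hT.existsUnique_path u v
  rw [(huniq p hp).trans (huniq q hq).symm, hlen]

theorem IsTree.dist_add_dist_eq_of_mem_support [DecidableEq V] (hT : T.IsTree)
    (p : T.Walk u v) (hp : p.IsPath) (hz : z ∈ p.support) :
    T.dist u z + T.dist z v = T.dist u v := by
  have hsplit : (p.takeUntil z hz).length + (p.dropUntil z hz).length = p.length := by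
    rw [← Walk.length_append, Walk.take_spec]
  have := hT.length_eq_dist p hp
  have := T.dist_le (p.takeUntil z hz)
  have := T.dist_le (p.dropUntil z hz)
  have : T.dist u v ≤ T.dist u z + T.dist z v := hT.connected.dist_triangle
  omega

theorem IsTree.mem_support_of_dist_add_dist_eq (hT : T.IsTree) (p : T.Walk u v)
    (hp : p.IsPath) (h : T.dist u z + T.dist z v = T.dist u v) : z ∈ p.support := by
  obtain ⟨p₁, -, hp₁⟩ := hT.connected.exists_path_of_dist u z
  obtain ⟨p₂, -, hp₂⟩ := hT.connected.exists_path_of_dist z v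
  have hpath : (p₁.append p₂).IsPath :=
    Walk.isPath_of_length_eq_dist _ (by rw [Walk.length_append, hp₁, hp₂, h])
  obtain ⟨_, _, huniq⟩ := hT.existsUnique_path u v
  rw [← (huniq _ hpath).trans (huniq p hp).symm]
  exact Walk.mem_support_append_iff _ _ |>.mpr (Or.inl p₁.end_mem_support)

theorem IsTree.dist_add_dist_eq_or (hT : T.IsTree)
    (hz : T.dist u z + T.dist z v = T.dist u v) (hc : T.dist u c + T.dist c v = T.dist u v) :
    T.dist u z + T.dist z c = T.dist u c ∨ T.dist c z + T.dist z v = T.dist c v := by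
  classical
  obtain ⟨p, hp, -⟩ := hT.existsUnique_path u v
  have hcp := hT.mem_support_of_dist_add_dist_eq p hp hc
  have hzp : z ∈ (p.takeUntil c hcp).support ∨ z ∈ (p.dropUntil c hcp).support := by
    rw [← Walk.mem_support_append_iff, Walk.take_spec]
    exact hT.mem_support_of_dist_add_dist_eq p hp hz
  exact hzp.imp (hT.dist_add_dist_eq_of_mem_support _ (hp.takeUntil hcp))
    (hT.dist_add_dist_eq_of_mem_support _ (hp.dropUntil hcp))

theorem IsTree.dist_add_dist_eq_of_le (hT : T.IsTree)
    (hz : T.dist u z + T.dist z v = T.dist u v) (hc : T.dist u c + T.dist c v = T.dist u v)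
    (hle : T.dist u z ≤ T.dist u c) : T.dist u z + T.dist z c = T.dist u c := by
  rcases hT.dist_add_dist_eq_or hz hc with h | h
  · exact h
  · rw [T.dist_comm (u := c)] at h
    omega

/-- A median of the triple `x, y, z`, whose entries, unlike those of `isMedianOf`, may repeat. -/
def IsMedian (T : SimpleGraph V) (x y z m : V) : Prop :=
  T.dist x m + T.dist m y = T.dist x y ∧ T.dist x m + T.dist m z = T.dist x z ∧
    T.dist y m + T.dist m z = T.dist y z

theorem IsMedian.swap_left (h : T.IsMedian x y z m) : T.IsMedian y x z m := by
  grind [IsMedian, dist_comm]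

theorem IsMedian.swap_right (h : T.IsMedian x y z m) : T.IsMedian x z y m := by
  grind [IsMedian, dist_comm]

theorem isMedian_of_isMedianOf [DecidableEq V] (hxy : x ≠ y) (hxz : x ≠ z) (hyz : y ≠ z)
    (h : isMedianOf T {x, y, z} m) : T.IsMedian x y z m :=
  ⟨h x (by simp) y (by simp) hxy, h x (by simp) z (by simp) hxz, h y (by simp) z (by simp) hyz⟩

theorem IsTree.dist_add_dist_eq_of_isPath_of_forall_le (hT : T.IsTree) (p : T.Walk c u)
    (hp : p.IsPath) (hmin : ∀ z ∈ p.support, T.dist w c ≤ T.dist w z) :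
    T.dist w c + T.dist c u = T.dist w u := by
  classical
  obtain ⟨q, hq, hqlen⟩ := hT.connected.exists_path_of_dist w c
  have hnodup := hp.support_nodup
  rw [← Walk.cons_tail_support, List.nodup_cons] at hnodup
  -- `c` is the vertex of `p` nearest to `w`, so `q` meets `p` only in `c`
  have hqp : (q.append p).IsPath := by
    rw [Walk.isPath_def, Walk.support_append, List.nodup_append]
    refine ⟨hq.support_nodup, hnodup.2, fun z hzq z' hzp hzz => ?_⟩
    subst hzz
    have hz := hT.dist_add_dist_eq_of_mem_support q hq hzq
    have := hmin z (List.mem_of_mem_tail hzp)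
    have hzc : z = c := hT.connected.dist_eq_zero_iff.mp (by omega)
    exact hnodup.1 (hzc ▸ hzp)
  rw [← hT.length_eq_dist _ hqp, Walk.length_append, hqlen, hT.length_eq_dist p hp]

theorem IsTree.exists_isMedian (hT : T.IsTree) (u v w : V) : ∃ c, T.IsMedian u v w c := by
  classical
  obtain ⟨p, hp, -⟩ := hT.existsUnique_path u v
  obtain ⟨c, hc, hmin⟩ := p.support.toFinset.exists_min_image (T.dist w) ⟨u, by simp⟩
  rw [List.mem_toFinset] at hc
  have hmin' : ∀ z ∈ p.support, T.dist w c ≤ T.dist w z := fun z hz =>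
    hmin z (List.mem_toFinset.mpr hz)
  have hcu := hT.dist_add_dist_eq_of_isPath_of_forall_le (p.takeUntil c hc).reverse
    (hp.takeUntil hc).reverse fun z hz => hmin' z <| p.support_takeUntil_subset_support hc <| by
      simpa using hz
  have hcv := hT.dist_add_dist_eq_of_isPath_of_forall_le (p.dropUntil c hc)
    (hp.dropUntil hc) fun z hz => hmin' z (p.support_dropUntil_subset_support hc hz)
  have huv := hT.dist_add_dist_eq_of_mem_support p hp hc
  exact ⟨c, by grind [IsMedian, dist_comm]⟩

theorem IsTree.eq_of_isMedian (hT : T.IsTree) (h : T.IsMedian x y z m)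
    (h' : T.IsMedian x y z m') : m = m' := by
  obtain ⟨h₁, h₂, h₃⟩ := h
  obtain ⟨h₁', h₂', h₃'⟩ := h'
  have hdist : T.dist x m = T.dist x m' := by grind [dist_comm]
  have := hT.dist_add_dist_eq_of_le h₁ h₁' hdist.le
  exact hT.connected.dist_eq_zero_iff.mp (by omega)

theorem Connected.dist_add_dist_ne_of_degree_eq_one [Fintype V] [DecidableRel T.Adj]
    (hT : T.Connected) (hx : T.degree x = 1) (hu : u ≠ x) (hv : v ≠ x) :
    T.dist u x + T.dist x v ≠ T.dist u v := by
  obtain ⟨y, hy⟩ := Finset.card_eq_one.mp ((T.card_neighborFinset_eq_degree x).trans hx)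
  have hdist : ∀ u ≠ x, T.dist u y + 1 ≤ T.dist u x := fun u hu => by
    obtain ⟨p, hp⟩ := hT.exists_walk_length_eq_dist u x
    have hnil : ¬ p.Nil := Walk.not_nil_of_ne hu
    have hpen : p.penultimate = y := by
      simpa [hy] using (T.mem_neighborFinset x _).mpr (p.adj_penultimate hnil).symm
    rw [← hp, ← Walk.length_dropLast_add_one hnil]
    exact Nat.add_le_add_right (hpen ▸ T.dist_le p.dropLast) 1
  have := hdist u hu
  have := hdist v hv
  have : T.dist u v ≤ T.dist u y + T.dist y v := hT.dist_triangle
  grind [dist_comm]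

theorem IsTree.dist_eq_dist_add_dist_of_isMedian (hT : T.IsTree) (hp : T.IsMedian a b x p)
    (hz : T.dist a z + T.dist z b = T.dist a b) : T.dist x z = T.dist x p + T.dist p z := by
  wlog hle : T.dist a z ≤ T.dist a p generalizing a b
  · exact this hp.swap_left (by grind [dist_comm]) (by grind [IsMedian, dist_comm])
  have := hT.dist_add_dist_eq_of_le hz hp.1 hle
  have : T.dist x a ≤ T.dist x z + T.dist z a := hT.connected.dist_triangle
  have : T.dist x z ≤ T.dist x p + T.dist p z := hT.connected.dist_triangle
  grind [IsMedian, dist_comm]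

theorem IsTree.dist_eq_dist_add_dist_of_isMedian_of_between (hT : T.IsTree)
    (hp : T.IsMedian a b x p) (hz : T.dist p z + T.dist z x = T.dist p x)
    (hw : T.dist a w + T.dist w b = T.dist a b) : T.dist z w = T.dist z p + T.dist p w := by
  have := hT.dist_eq_dist_add_dist_of_isMedian hp hw
  have : T.dist x w ≤ T.dist x z + T.dist z w := hT.connected.dist_triangle
  have : T.dist z w ≤ T.dist z p + T.dist p w := hT.connected.dist_triangle
  grind [dist_comm]

theorem IsTree.dist_eq_of_isMedian_of_ne (hT : T.IsTree) (hu : T.IsMedian a b u p)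
    (hv : T.IsMedian a b v q) (hpq : p ≠ q) :
    T.dist u v = T.dist u p + T.dist p q + T.dist q v := by
  -- the median `c` of `u, v, p` lies on the branch of `u`, so it is `p` unless `p = q`
  obtain ⟨c, hc⟩ := hT.exists_isMedian u v p
  have hcq := hT.dist_eq_dist_add_dist_of_isMedian_of_between (z := c) hu
    (by grind [IsMedian, dist_comm]) hv.1
  have hvp := hT.dist_eq_dist_add_dist_of_isMedian hv hu.1
  rcases hT.dist_add_dist_eq_or (u := v) (v := p) (z := c) (c := q)
    (by grind [IsMedian, dist_comm]) (by grind [dist_comm]) with h | h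
  · exact absurd (hT.connected.dist_eq_zero_iff.mp (by grind [IsMedian, dist_comm])) hpq
  · grind [IsMedian, dist_comm]

theorem IsTree.isMedian_of_isMedian_of_between (hT : T.IsTree) (hu : T.IsMedian a b u p)
    (hv : T.IsMedian a b v q) (hw : T.IsMedian a b w r)
    (hq : T.dist p q + T.dist q r = T.dist p r) (hpq : p ≠ q) (hqr : q ≠ r) :
    T.IsMedian u v w q := by
  have hpr : p ≠ r := by
    rintro rfl
    exact hpq (hT.connected.dist_eq_zero_iff.mp (by grind [dist_comm]))
  have := hT.dist_eq_of_isMedian_of_ne hu hv hpq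
  have := hT.dist_eq_of_isMedian_of_ne hv hw hqr
  have := hT.dist_eq_of_isMedian_of_ne hu hw hpr
  have := hT.dist_eq_dist_add_dist_of_isMedian hu hv.1
  have := hT.dist_eq_dist_add_dist_of_isMedian hw hv.1
  grind [IsMedian, dist_comm]

theorem IsTree.between_or_between_or_between (hT : T.IsTree)
    (hp : T.dist a p + T.dist p b = T.dist a b) (hq : T.dist a q + T.dist q b = T.dist a b)
    (hr : T.dist a r + T.dist r b = T.dist a b) :
    T.dist p q + T.dist q r = T.dist p r ∨ T.dist q p + T.dist p r = T.dist q r ∨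
      T.dist p r + T.dist r q = T.dist p q := by
  have hle : ∀ {s t}, T.dist a s + T.dist s b = T.dist a b →
      T.dist a t + T.dist t b = T.dist a b →
      T.dist a s + T.dist s t = T.dist a t ∨ T.dist a t + T.dist t s = T.dist a s :=
    fun hs ht => (le_total _ _).imp (hT.dist_add_dist_eq_of_le hs ht)
      (hT.dist_add_dist_eq_of_le ht hs)
  have := hle hp hq
  have := hle hq hr
  have := hle hp hr
  grind [dist_comm]

theorem IsTree.eq_or_eq_or_eq_of_isMedian (hT : T.IsTree) (hu : T.IsMedian a b u p)
    (hv : T.IsMedian a b v q) (hw : T.IsMedian a b w r) (hpq : p ≠ q) (hpr : p ≠ r)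
    (hqr : q ≠ r) (hm : T.IsMedian u v w m) : m = p ∨ m = q ∨ m = r := by
  rcases hT.between_or_between_or_between hu.1 hv.1 hw.1 with h | h | h
  · exact Or.inr <| Or.inl <| hT.eq_of_isMedian hm <|
      hT.isMedian_of_isMedian_of_between hu hv hw h hpq hqr
  · exact Or.inl <| hT.eq_of_isMedian hm.swap_left <|
      hT.isMedian_of_isMedian_of_between hv hu hw h hpq.symm hpr
  · exact Or.inr <| Or.inr <| hT.eq_of_isMedian hm.swap_right <|
      hT.isMedian_of_isMedian_of_between hu hw hv h hpr hqr.symm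

theorem IsTree.exists_mem_eq_of_isMedianOf [DecidableEq V] (hT : T.IsTree) {S : Finset V}
    {π : V → V} (hS : S.card = 3) (hm : isMedianOf T S m)
    (hπ : ∀ x ∈ S, T.IsMedian a b x (π x)) (hπinj : Set.InjOn π S) : ∃ x ∈ S, m = π x := by
  obtain ⟨u, v, w, huv, huw, hvw, rfl⟩ := Finset.card_eq_three.mp hS
  have hne : ∀ {x y}, x ∈ ({u, v, w} : Finset V) → y ∈ ({u, v, w} : Finset V) → x ≠ y →
      π x ≠ π y := fun hx hy hxy => hπinj.ne hx hy hxy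
  rcases hT.eq_or_eq_or_eq_of_isMedian (hπ u (by simp)) (hπ v (by simp)) (hπ w (by simp))
    (hne (by simp) (by simp) huv) (hne (by simp) (by simp) huw) (hne (by simp) (by simp) hvw)
    (isMedian_of_isMedianOf huv huw hvw hm) with h | h | h
  · exact ⟨u, by simp, h⟩
  · exact ⟨v, by simp, h⟩
  · exact ⟨w, by simp, h⟩

theorem Connected.eq_of_isMedian_of_degree_eq_one [Fintype V] [DecidableRel T.Adj]
    (hT : T.Connected) (ha : T.degree a = 1) (hba : b ≠ a) (h : T.IsMedian a b x a) : x = a :=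
  by_contra fun hxa => hT.dist_add_dist_ne_of_degree_eq_one ha hba hxa h.2.2

theorem Connected.ne_of_isMedianOf_of_degree_eq_one [Fintype V] [DecidableEq V]
    [DecidableRel T.Adj] (hT : T.Connected) {S : Finset V} (hS : S.card = 3) (hx : x ∈ S)
    (hxdeg : T.degree x = 1) (hm : isMedianOf T S m) : m ≠ x := by
  rintro rfl
  obtain ⟨y, z, hyz, hS'⟩ := Finset.card_eq_two.mp (by rw [Finset.card_erase_of_mem hx, hS])
  have hy : y ∈ S.erase m := by simp [hS']
  have hz : z ∈ S.erase m := by simp [hS']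
  exact hT.dist_add_dist_ne_of_degree_eq_one hxdeg (Finset.ne_of_mem_erase hy)
    (Finset.ne_of_mem_erase hz)
    (hm y (Finset.mem_of_mem_erase hy) z (Finset.mem_of_mem_erase hz) hyz)

theorem isMedian_ite [DecidableEq V] {g : V → V} (hab : a ≠ b)
    (hg : x ≠ a → x ≠ b → isMedianOf T {a, b, x} (g x)) :
    T.IsMedian a b x (if x = a ∨ x = b then x else g x) := by
  by_cases hx : x = a ∨ x = b
  · rcases hx with rfl | rfl <;> simp [IsMedian, dist_comm]
  · rw [if_neg hx]
    rw [not_or] at hx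
    exact isMedian_of_isMedianOf hab (Ne.symm hx.1) (Ne.symm hx.2) (hg hx.1 hx.2)

theorem Connected.injOn_ite_of_isMedian [Fintype V] [DecidableEq V] [DecidableRel T.Adj]
    (hT : T.Connected) (ha : T.degree a = 1) (hb : T.degree b = 1) (hab : a ≠ b)
    {Y : Finset V} {g : V → V}
    (hπ : ∀ x ∈ Y, T.IsMedian a b x (if x = a ∨ x = b then x else g x))
    (hginj : Set.InjOn g (Y \ {a, b} : Finset V)) :
    Set.InjOn (fun x => if x = a ∨ x = b then x else g x) Y := by
  set π : V → V := fun x => if x = a ∨ x = b then x else g x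
  have hfix : ∀ x ∈ Y, π x = a ∨ π x = b → π x = x := by
    intro x hx h
    have hπx : T.IsMedian a b x (π x) := hπ x hx
    rcases h with h | h <;> rw [h] at hπx ⊢
    · exact (hT.eq_of_isMedian_of_degree_eq_one ha hab.symm hπx).symm
    · exact (hT.eq_of_isMedian_of_degree_eq_one hb hab hπx.swap_left).symm
  intro x hx y hy hxy
  by_cases hab' : π x = a ∨ π x = b
  · rw [← hfix x hx hab', ← hfix y hy (hxy ▸ hab'), hxy]
  · have hx' : ¬(x = a ∨ x = b) := fun h => hab' (by simp [π, h])
    have hy' : ¬(y = a ∨ y = b) := fun h => hab' (by rw [hxy]; simp [π, h])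
    simp only [π, if_neg hx', if_neg hy'] at hxy
    exact hginj (by simp_all) (by simp_all) hxy

end SimpleGraph

open SimpleGraph in
theorem stmt_17_general {V : Type*} [Fintype V] [DecidableEq V]
    (T : SimpleGraph V) [DecidableRel T.Adj] (hT : T.IsTree)
    (X : Finset V) (hleaf : ∀ v : V, T.degree v = 1 ↔ v ∈ X)
    (Y : Finset V) (hYX : Y ⊆ X)
    (a b : V) (ha : a ∈ Y) (hb : b ∈ Y) (hab : a ≠ b)
    (g : V → V) (hg : ∀ y ∈ Y \ {a, b}, isMedianOf T {a, b, y} (g y))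
    (hginj : Set.InjOn g (Y \ {a, b} : Finset V)) :
    ∀ m : V, (∃ S ⊆ Y, S.card = 3 ∧ isMedianOf T S m) ↔
      ∃ y ∈ Y \ {a, b}, isMedianOf T {a, b, y} m := by
  have hdeg : ∀ y ∈ Y, T.degree y = 1 := fun y hy => (hleaf y).2 (hYX hy)
  let π : V → V := fun x => if x = a ∨ x = b then x else g x
  have hπ : ∀ x ∈ Y, T.IsMedian a b x (π x) := fun x hx =>
    isMedian_ite hab fun hxa hxb => hg x (by simp [hx, hxa, hxb])
  have hπinj : Set.InjOn π Y :=
    hT.connected.injOn_ite_of_isMedian (hdeg a ha) (hdeg b hb) hab hπ hginj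
  intro m
  constructor
  · rintro ⟨S, hSY, hS, hm⟩
    obtain ⟨x, hxS, rfl⟩ := hT.exists_mem_eq_of_isMedianOf hS hm (fun x hx => hπ x (hSY hx))
      (hπinj.mono hSY)
    have hx : ¬(x = a ∨ x = b) := fun h => hT.connected.ne_of_isMedianOf_of_degree_eq_one
      hS hxS (hdeg x (hSY hxS)) hm (by simp [π, h])
    have hxY : x ∈ Y \ {a, b} := by simp_all [hSY hxS]
    exact ⟨x, hxY, by simpa only [π, if_neg hx] using hg x hxY⟩
  · rintro ⟨y, hy, hmy⟩
    simp only [Finset.mem_sdiff, Finset.mem_insert, Finset.mem_singleton, not_or] at hy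
    refine ⟨{a, b, y}, ?_, Finset.card_eq_three.mpr ⟨a, b, y, hab, ?_, ?_, rfl⟩, hmy⟩
    · simp [Finset.insert_subset_iff, ha, hb, hy.1]
    · exact Ne.symm hy.2.1
    · exact Ne.symm hy.2.2

theorem stmt_17 {V : Type*} [Fintype V] [DecidableEq V]
    (T : SimpleGraph V) [DecidableRel T.Adj] (hT : T.IsTree)
    (X : Finset V) (hleaf : ∀ v : V, T.degree v = 1 ↔ v ∈ X)
    (hdeg3 : ∀ v : V, v ∉ X → T.degree v = 3)
    (Y : Finset V) (hYX : Y ⊆ X) (hY : 3 ≤ Y.card)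
    (a b : V) (ha : a ∈ Y) (hb : b ∈ Y) (hab : a ≠ b)
    (g : V → V) (hg : ∀ y ∈ Y \ {a, b}, isMedianOf T {a, b, y} (g y))
    (hginj : Set.InjOn g (Y \ {a, b} : Finset V)) :
    ∀ m : V, (∃ S ⊆ Y, S.card = 3 ∧ isMedianOf T S m) ↔
      ∃ y ∈ Y \ {a, b}, isMedianOf T {a, b, y} m :=
  stmt_17_general T hT X hleaf Y hYX a b ha hb hab g hg hginj
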